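/- Let (𝔙, 𝔙⁺) be a non-degenerate ordered 𝔉-bimodule with a local order unit 𝔢, and suppose 𝔙⁺ is Archimedean. Then for 𝔳 ∈ 𝔍ₙ𝔙𝔍ₙ and k > 0: (k𝔢ⁿ, k𝔢ⁿ)ₙ⁺ + saₙ(𝔳) ∈ 𝔙⁺ if and only if (k𝔢ⁿ, k𝔢ⁿ)ₙ⁺ − saₙ(𝔳) ∈ 𝔙⁺. -/

import Mathlib

noncomputable section

open scoped Matrix.Norms.L2Operator

/-! ### The *-algebra 𝔉 of ∞×∞ complex matrices with finitely many nonzero entries -/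

/-- `∞ × ∞` complex matrices (indexed by `ℕ × ℕ`). -/
abbrev FMat := ℕ → ℕ → ℂ

/-- The matrix has (at most) finitely many nonzero entries: it is supported in some
`n × n` top-left block. -/
def IsFin (a : FMat) : Prop := ∃ n, ∀ i j, (n ≤ i ∨ n ≤ j) → a i j = 0

/-- Matrix multiplication in `𝔉` (the `tsum` is a finite sum for finitely supported
matrices). -/
def fmul (a b : FMat) : FMat := fun i k => ∑' j, a i j * b j k

/-- The involution (conjugate transpose) on `𝔉`. -/
def fstar (a : FMat) : FMat := fun i j => starRingEnd ℂ (a j i)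

/-- The matrix unit `𝔢_{i,j}`. -/
def eUnit (i j : ℕ) : FMat := fun k l => if k = i ∧ l = j then 1 else 0

/-- `𝔍ₙ = Σ_{i<n} 𝔢_{i,i}`, the partial identities. -/
def JMat (n : ℕ) : FMat := fun k l => if k = l ∧ k < n then 1 else 0

/-- `𝔎ₙ = Σ_{i<n} 𝔢_{i,n+i}`, used for `2×2`-block constructions. -/
def KMat (n : ℕ) : FMat := fun k l => if l = k + n ∧ k < n then 1 else 0

/-- The diagonal idempotent `Σ_{i ∈ s} 𝔢_{i,i}` associated to a finite set `s ⊂ ℕ`. -/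
def finsetDiag (s : Finset ℕ) : FMat := fun k l => if k = l ∧ k ∈ s then 1 else 0

/-- The operator norm on `𝔉`: the supremum of the (C*-algebra) operator norms of the
finite top-left blocks (for a finitely supported matrix the blocks stabilize). -/
def fnorm (a : FMat) : ℝ :=
  ⨆ n : ℕ, ‖(Matrix.of fun i j : Fin n => a i j : Matrix (Fin n) (Fin n) ℂ)‖

/-- The order `o(𝔞)` of a finitely supported matrix: the least `n` such that `𝔞` is
supported in the top-left `n × n` block. -/
def matOrd (a : FMat) : ℕ := sInf {n | ∀ i j, (n ≤ i ∨ n ≤ j) → a i j = 0}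

/-- A local unitary in `𝔉`: `𝔞*𝔞 = 𝔍_{o(𝔞)} = 𝔞𝔞*`. -/
def IsLocalUnitary (a : FMat) : Prop :=
  IsFin a ∧ fmul (fstar a) a = JMat (matOrd a) ∧ fmul a (fstar a) = JMat (matOrd a)

/-! ### Non-degenerate *-𝔉-bimodules -/

/-- A non-degenerate `*`-`𝔉`-bimodule structure on a complex vector space `V`:
left and right actions of (finitely supported) infinite matrices together with an
involution, compatible with each other and with the complex scalars, such that every
element is `𝔍ₙ·v·𝔍ₙ` for some `n`. -/
structure FBimod (V : Type*) [AddCommGroup V] [Module ℂ V] where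
  lsmul : FMat → V → V
  rsmul : V → FMat → V
  star : V → V
  lsmul_add : ∀ a u v, lsmul a (u + v) = lsmul a u + lsmul a v
  rsmul_add : ∀ u v b, rsmul (u + v) b = rsmul u b + rsmul v b
  add_lsmul : ∀ a b v, IsFin a → IsFin b → lsmul (a + b) v = lsmul a v + lsmul b v
  rsmul_add' : ∀ v a b, IsFin a → IsFin b → rsmul v (a + b) = rsmul v a + rsmul v b
  smul_lsmul : ∀ (c : ℂ) a v, IsFin a → lsmul (c • a) v = c • lsmul a v
  smul_rsmul : ∀ (c : ℂ) v a, IsFin a → rsmul v (c • a) = c • rsmul v a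
  mul_lsmul : ∀ a b v, IsFin a → IsFin b → lsmul (fmul a b) v = lsmul a (lsmul b v)
  rsmul_mul : ∀ v a b, IsFin a → IsFin b → rsmul v (fmul a b) = rsmul (rsmul v a) b
  lsmul_rsmul : ∀ a v b, IsFin a → IsFin b → rsmul (lsmul a v) b = lsmul a (rsmul v b)
  star_add : ∀ u v, star (u + v) = star u + star v
  star_star : ∀ v, star (star v) = v
  star_lsmul : ∀ a v, IsFin a → star (lsmul a v) = rsmul (star v) (fstar a)
  star_rsmul : ∀ v a, IsFin a → star (rsmul v a) = lsmul (fstar a) (star v)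
  smul_compat : ∀ (c : ℂ) (n : ℕ) v, lsmul (JMat n) (rsmul v (JMat n)) = v →
    lsmul (c • JMat n) v = c • v
  nondeg : ∀ v, ∃ n, lsmul (JMat n) (rsmul v (JMat n)) = v

namespace FBimod

variable {V : Type*} [AddCommGroup V] [Module ℂ V] (M : FBimod V)

/-- `𝔍ₙ 𝔳 𝔍ₙ`. -/
def cut (n : ℕ) (v : V) : V := M.lsmul (JMat n) (M.rsmul v (JMat n))

/-- The order `o(𝔳)`: the smallest `n` with `𝔍ₙ 𝔳 𝔍ₙ = 𝔳`. -/
def ord (v : V) : ℕ := sInf {n | M.cut n v = v}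

/-- `𝔞* 𝔳 𝔞`. -/
def conj (a : FMat) (v : V) : V := M.lsmul (fstar a) (M.rsmul v a)

/-- `C` is a bimodule cone: consists of self-adjoint elements, is closed under
addition and under `𝔳 ↦ 𝔞*𝔳𝔞` for `𝔞 ∈ 𝔉`. -/
def IsCone (C : Set V) : Prop :=
  (∀ v ∈ C, M.star v = v) ∧ (∀ u ∈ C, ∀ v ∈ C, u + v ∈ C) ∧
    (∀ v ∈ C, ∀ a : FMat, IsFin a → M.conj a v ∈ C)

/-- The cone `C` is proper: `C ∩ (−C) = {0}`. -/
def ConeProper (C : Set V) : Prop := ∀ v ∈ C, -v ∈ C → v = 0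

/-- The cone `C` is Archimedean. -/
def ConeArch (C : Set V) : Prop :=
  ∀ u ∈ C, ∀ v : V, M.star v = v → (∀ k : ℝ, 0 < k → (k : ℂ) • u + v ∈ C) → v ∈ C

/-- The cone `C` is generating. -/
def ConeGen (C : Set V) : Prop :=
  ∀ v : V, ∃ v₀ ∈ C, ∃ v₁ ∈ C, ∃ v₂ ∈ C, ∃ v₃ ∈ C,
    v = v₀ + Complex.I • v₁ - v₂ - Complex.I • v₃

/-- `(𝔳₁, 𝔳₂)ₙ⁺ = 𝔳₁ + 𝔎ₙ* 𝔳₂ 𝔎ₙ` (the diagonal `2×2`-block `diag(𝔳₁,𝔳₂)`). -/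
def pairPlus (n : ℕ) (v₁ v₂ : V) : V :=
  v₁ + M.lsmul (fstar (KMat n)) (M.rsmul v₂ (KMat n))

/-- `saₙ(𝔳) = 𝔍ₙ 𝔳 𝔎ₙ + 𝔎ₙ* 𝔳* 𝔍ₙ` (the off-diagonal `2×2`-block of `𝔳`). -/
def san (n : ℕ) (v : V) : V :=
  M.lsmul (JMat n) (M.rsmul v (KMat n)) +
    M.lsmul (fstar (KMat n)) (M.rsmul (M.star v) (JMat n))

/-- `𝔲` and `𝔳` are `𝔉`-independent: compressed onto disjoint diagonal blocks. -/
def FIndep (u v : V) : Prop :=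
  ∃ I J : Finset ℕ, Disjoint I J ∧
    M.lsmul (finsetDiag I) (M.rsmul u (finsetDiag I)) = u ∧
    M.lsmul (finsetDiag J) (M.rsmul v (finsetDiag J)) = v

/-- `(𝔙, C, abs)` is a non-degenerate absolutely ordered `𝔉`-bimodule
(Definition 18 of the paper). -/
structure IsAbsOrd (C : Set V) (abs : V → V) : Prop where
  cone : M.IsCone C
  abs_mem : ∀ v, abs v ∈ C
  ord_abs_le : ∀ v, M.ord (abs v) ≤ M.ord v
  abs_of_mem : ∀ v ∈ C, abs v = v
  pos_part : ∀ v, M.pairPlus (M.ord v) (abs (M.star v)) (abs v) + M.san (M.ord v) v ∈ C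
  abs_smul_le : ∀ (a b : FMat), IsFin a → IsFin b → ∀ v,
    (fnorm a : ℂ) • abs (M.rsmul (abs v) b) - abs (M.lsmul a (M.rsmul v b)) ∈ C
  indep_add : ∀ u v, M.FIndep u v → abs (u + v) = abs u + abs v
  absorb : ∀ u ∈ C, ∀ v ∈ C, ∀ w ∈ C, abs (u - v) = u + v → v - w ∈ C →
    abs (u - w) = u + w
  ortho_pm : ∀ u ∈ C, ∀ v ∈ C, ∀ w ∈ C, abs (u - v) = u + v → abs (u - w) = u + w →
    abs (u - abs (v + w)) = u + abs (v + w) ∧ abs (u - abs (v - w)) = u + abs (v - w)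

/-- `eⁿ = Σ_{i<n} 𝔢_{i,0} 𝔢 𝔢_{0,i}` for an element `𝔢` of order `1`. -/
def epow (e : V) (n : ℕ) : V :=
  ∑ i ∈ Finset.range n, M.lsmul (eUnit i 0) (M.rsmul e (eUnit 0 i))

/-- `𝔢` is a local order unit for `(𝔙, C)`. -/
def IsLocalOrderUnit (C : Set V) (e : V) : Prop :=
  e ∈ C ∧ M.cut 1 e = e ∧ ∀ v : V, M.cut 1 v = v → ∃ k : ℝ, 0 < k ∧
    M.pairPlus 1 ((k : ℂ) • e) ((k : ℂ) • e) + M.san 1 v ∈ C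

/-- `(𝔙, C, 𝔢)` is a local `𝔉`-order unit bimodule. -/
def IsLocalUnitBimod (C : Set V) (e : V) : Prop :=
  M.IsCone C ∧ ConeProper C ∧ M.ConeArch C ∧ M.IsLocalOrderUnit C e

/-- The norm associated to a local order unit:
`‖𝔳‖ = inf { k > 0 : (k𝔢^{o(𝔳)}, k𝔢^{o(𝔳)})⁺_{o(𝔳)} + sa_{o(𝔳)}(𝔳) ∈ C }`. -/
def lnorm (C : Set V) (e : V) (v : V) : ℝ :=
  sInf {k : ℝ | 0 < k ∧
    M.pairPlus (M.ord v) ((k : ℂ) • M.epow e (M.ord v)) ((k : ℂ) • M.epow e (M.ord v)) +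
      M.san (M.ord v) v ∈ C}

/-- `𝔲 ⊥_∞ 𝔳` with respect to the local-order-unit norm. -/
def PerpInf (C : Set V) (e : V) (u v : V) : Prop :=
  ∀ k₁ k₂ : ℝ, M.lnorm C e ((k₁ : ℂ) • u + (k₂ : ℂ) • v) =
    max (M.lnorm C e ((k₁ : ℂ) • u)) (M.lnorm C e ((k₂ : ℂ) • v))

end FBimod
/-! ### Matrices over a complex *-vector space -/

section MatrixLevel

variable {V : Type*} [AddCommGroup V] [Module ℂ V] [StarAddMonoid V] [StarModule ℂ V]

/-- Conjugate transpose of a rectangular matrix over a `*`-vector space. -/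
def mstar {m n : ℕ} (v : Matrix (Fin m) (Fin n) V) : Matrix (Fin n) (Fin m) V :=
  fun i j => star (v j i)

/-- Left action of a scalar matrix: `(a v)_{ij} = Σ_k a_{ik} v_{kj}`. -/
def aSmul {r m n : ℕ} (a : Matrix (Fin r) (Fin m) ℂ) (v : Matrix (Fin m) (Fin n) V) :
    Matrix (Fin r) (Fin n) V :=
  fun i j => ∑ k, a i k • v k j

/-- Right action of a scalar matrix: `(v b)_{ij} = Σ_k b_{kj} • v_{ik}`. -/
def smulB {m n s : ℕ} (v : Matrix (Fin m) (Fin n) V) (b : Matrix (Fin n) (Fin s) ℂ) :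
    Matrix (Fin m) (Fin s) V :=
  fun i j => ∑ k, b k j • v i k

/-- Direct sum (block diagonal) of rectangular matrices over `V`. -/
def dsum {m n r s : ℕ} (v : Matrix (Fin m) (Fin n) V) (w : Matrix (Fin r) (Fin s) V) :
    Matrix (Fin (m + r)) (Fin (n + s)) V :=
  fun i j =>
    if hi : (i : ℕ) < m then
      (if hj : (j : ℕ) < n then v ⟨i, hi⟩ ⟨j, hj⟩ else 0)
    else
      (if hj : (j : ℕ) < n then 0
       else w ⟨(i : ℕ) - m, by have := i.isLt; omega⟩ ⟨(j : ℕ) - n, by have := j.isLt; omega⟩)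

end MatrixLevel

/-- The L2-operator norm of a rectangular complex scalar matrix. -/
def cnorm {r m : ℕ} (a : Matrix (Fin r) (Fin m) ℂ) : ℝ := ‖a‖

/-- Embedding of a finite rectangular complex matrix into `𝔉`. -/
def embC {r m : ℕ} (a : Matrix (Fin r) (Fin m) ℂ) : FMat :=
  fun i j => if hi : i < r then (if hj : j < m then a ⟨i, hi⟩ ⟨j, hj⟩ else 0) else 0

/-- `e ⊕ ⋯ ⊕ e`: the diagonal matrix with constant diagonal `e`. -/
def diagE {V : Type*} [AddCommGroup V] (e : V) (n : ℕ) : Matrix (Fin n) (Fin n) V :=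
  Matrix.of fun i j => if i = j then e else 0

/-! ### Absolutely matrix ordered spaces and absolute matrix order unit spaces -/

/-- An absolutely matrix ordered space structure on a complex `*`-vector space `V`:
matrix cones `Mₙ(V)⁺` and absolute values `|·|_{m,n} : M_{m,n}(V) → Mₙ(V)⁺`
(Definition 4.1 of Karn-Kumar). -/
structure AMOS (V : Type*) [AddCommGroup V] [Module ℂ V] [StarAddMonoid V]
    [StarModule ℂ V] where
  pos : ∀ n : ℕ, Set (Matrix (Fin n) (Fin n) V)
  abs : ∀ m n : ℕ, Matrix (Fin m) (Fin n) V → Matrix (Fin n) (Fin n) V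
  pos_star : ∀ n, ∀ v ∈ pos n, mstar v = v
  pos_add : ∀ n, ∀ u ∈ pos n, ∀ v ∈ pos n, u + v ∈ pos n
  pos_conj : ∀ m n (a : Matrix (Fin n) (Fin m) ℂ), ∀ v ∈ pos n,
    aSmul a.conjTranspose (smulB v a) ∈ pos m
  abs_mem : ∀ m n v, abs m n v ∈ pos n
  abs_of_pos : ∀ n, ∀ v ∈ pos n, abs n n v = v
  abs_add_self : ∀ n (v : Matrix (Fin n) (Fin n) V), mstar v = v →
    abs n n v + v ∈ pos n ∧ abs n n v - v ∈ pos n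
  abs_real_smul : ∀ n (k : ℝ) (v : Matrix (Fin n) (Fin n) V), mstar v = v →
    abs n n ((k : ℂ) • v) = ((|k| : ℝ) : ℂ) • abs n n v
  absorb : ∀ n, ∀ u ∈ pos n, ∀ v ∈ pos n, ∀ w ∈ pos n,
    abs n n (u - v) = u + v → v - w ∈ pos n → abs n n (u - w) = u + w
  ortho_pm : ∀ n, ∀ u ∈ pos n, ∀ v ∈ pos n, ∀ w ∈ pos n,
    abs n n (u - v) = u + v → abs n n (u - w) = u + w →
    abs n n (u - abs n n (v + w)) = u + abs n n (v + w) ∧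
      abs n n (u - abs n n (v - w)) = u + abs n n (v - w)
  abs_smul_le : ∀ (r m n s : ℕ) (α : Matrix (Fin r) (Fin m) ℂ)
    (v : Matrix (Fin m) (Fin n) V) (β : Matrix (Fin n) (Fin s) ℂ),
    (cnorm α : ℂ) • abs n s (smulB (abs m n v) β) - abs r s (aSmul α (smulB v β)) ∈ pos s
  abs_dsum : ∀ (m n r s : ℕ) (v : Matrix (Fin m) (Fin n) V) (w : Matrix (Fin r) (Fin s) V),
    abs (m + r) (n + s) (dsum v w) = dsum (abs m n v) (abs r s w)

/-- A matrix order unit structure on top of an absolutely matrix ordered space: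
an order unit `e` with `V⁺` proper and each `Mₙ(V)⁺` Archimedean. -/
structure AMOUS (V : Type*) [AddCommGroup V] [Module ℂ V] [StarAddMonoid V]
    [StarModule ℂ V] extends AMOS V where
  e : V
  e_pos : diagE e 1 ∈ pos 1
  proper : ∀ v ∈ pos 1, -v ∈ pos 1 → v = 0
  arch : ∀ n (v : Matrix (Fin n) (Fin n) V), mstar v = v →
    (∀ k : ℝ, 0 < k → (k : ℂ) • diagE e n + v ∈ pos n) →
    v ∈ pos n
  unit : ∀ n (v : Matrix (Fin n) (Fin n) V), mstar v = v →
    ∃ k : ℝ, 0 < k ∧ (k : ℂ) • diagE e n - v ∈ pos n ∧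
      (k : ℂ) • diagE e n + v ∈ pos n

namespace AMOUS

variable {V : Type*} [AddCommGroup V] [Module ℂ V] [StarAddMonoid V] [StarModule ℂ V]
variable (A : AMOUS V)

/-- `eⁿ = e ⊕ ⋯ ⊕ e ∈ Mₙ(V)`. -/
def eN (n : ℕ) : Matrix (Fin n) (Fin n) V := diagE A.e n

/-- The `2n × 2n` matrix `[[a, b], [c, d]]` of `n × n` blocks. -/
def block2 {n : ℕ} (a b c d : Matrix (Fin n) (Fin n) V) :
    Matrix (Fin (n + n)) (Fin (n + n)) V :=
  fun i j =>
    if hi : (i : ℕ) < n then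
      (if hj : (j : ℕ) < n then a ⟨i, hi⟩ ⟨j, hj⟩
       else b ⟨i, hi⟩ ⟨(j : ℕ) - n, by have := j.isLt; omega⟩)
    else
      (if hj : (j : ℕ) < n then c ⟨(i : ℕ) - n, by have := i.isLt; omega⟩ ⟨j, hj⟩
       else d ⟨(i : ℕ) - n, by have := i.isLt; omega⟩ ⟨(j : ℕ) - n, by have := j.isLt; omega⟩)

end AMOUS
namespace AMOUS

variable {V : Type*} [AddCommGroup V] [Module ℂ V] [StarAddMonoid V] [StarModule ℂ V]
variable (A : AMOUS V)

/-- The matrix norms of a matrix order unit space: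
`‖v‖ₙ = inf { k > 0 : [[k eⁿ, v], [v*, k eⁿ]] ∈ M₂ₙ(V)⁺ }`. -/
def mnorm (n : ℕ) (v : Matrix (Fin n) (Fin n) V) : ℝ :=
  sInf {k : ℝ | 0 < k ∧
    block2 ((k : ℂ) • A.eN n) v (mstar v) ((k : ℂ) • A.eN n) ∈ A.pos (n + n)}

/-- Orthogonality `u ⊥ v` (for positive elements): `|u − v| = u + v`. -/
def Perp {n : ℕ} (u v : Matrix (Fin n) (Fin n) V) : Prop :=
  A.abs n n (u - v) = u + v

/-- `u ⊥_∞ v`: `‖k₁ u + k₂ v‖ = max {‖k₁ u‖, ‖k₂ v‖}` for all real `k₁, k₂`. -/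
def PerpInfM {n : ℕ} (u v : Matrix (Fin n) (Fin n) V) : Prop :=
  ∀ k₁ k₂ : ℝ, A.mnorm n ((k₁ : ℂ) • u + (k₂ : ℂ) • v) =
    max (A.mnorm n ((k₁ : ℂ) • u)) (A.mnorm n ((k₂ : ℂ) • v))

/-- `u ⊥_∞^a v`: absolute `∞`-orthogonality. -/
def PerpInfA {n : ℕ} (u v : Matrix (Fin n) (Fin n) V) : Prop :=
  ∀ u₁ ∈ A.pos n, ∀ v₁ ∈ A.pos n, u - u₁ ∈ A.pos n → v - v₁ ∈ A.pos n → A.PerpInfM u₁ v₁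

/-- `(V, {Mₙ(V)⁺}, {|·|}, e)` is an absolute matrix order unit space:
`⊥ = ⊥_∞^a` on each `Mₙ(V)⁺`. -/
def IsAbsolute : Prop :=
  ∀ n, ∀ u ∈ A.pos n, ∀ v ∈ A.pos n, (A.Perp u v ↔ A.PerpInfA u v)

/-- `p` is an order projection in `Mₙ(V)`: `p* = p` and `|2p − eⁿ| = eⁿ`. -/
def IsOP (n : ℕ) (p : Matrix (Fin n) (Fin n) V) : Prop :=
  mstar p = p ∧ A.abs n n ((2 : ℂ) • p - A.eN n) = A.eN n

/-- `v ∈ M_{m,n}(V)` is a partial isometry: `|v|` and `|v*|` are order projections. -/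
def IsPI {m n : ℕ} (v : Matrix (Fin m) (Fin n) V) : Prop :=
  A.IsOP n (A.abs m n v) ∧ A.IsOP m (A.abs n m (mstar v))

end AMOUS

/-- An element of `M_∞(V)`: a matrix at some level `n`. -/
def OPE (V : Type*) : Type _ := Σ n : ℕ, Matrix (Fin n) (Fin n) V

namespace OPE

variable {V : Type*} [AddCommGroup V] [Module ℂ V] [StarAddMonoid V] [StarModule ℂ V]

/-- Direct sum in `M_∞(V)`. -/
def d (p q : OPE V) : OPE V := ⟨p.1 + q.1, dsum p.2 q.2⟩

/-- The zero order projection (at level 1). -/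
def zero (V : Type*) [AddCommGroup V] : OPE V := ⟨1, 0⟩

end OPE

namespace AMOUS

variable {V : Type*} [AddCommGroup V] [Module ℂ V] [StarAddMonoid V] [StarModule ℂ V]
variable (A : AMOUS V)

/-- Membership in `𝒪𝒫_∞(V)`. -/
def IsOPE (p : OPE V) : Prop := A.IsOP p.1 p.2

/-- `eⁿ` as an element of `𝒪𝒫_∞(V)`. -/
def eOPE (n : ℕ) : OPE V := ⟨n, A.eN n⟩

/-- Partial isometric equivalence `p ∼ q` of order projections: there is a partial
isometry `v` with `p = |v*|` and `q = |v|`. -/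
def Sim (p q : OPE V) : Prop :=
  ∃ v : Matrix (Fin p.1) (Fin q.1) V,
    A.IsPI v ∧ p.2 = A.abs q.1 p.1 (mstar v) ∧ q.2 = A.abs p.1 q.1 v

/-- Condition (T). -/
def CondT : Prop :=
  ∀ (m n l : ℕ) (u : Matrix (Fin m) (Fin n) V) (v : Matrix (Fin l) (Fin n) V),
    A.IsPI u → A.IsPI v → A.abs m n u = A.abs l n v →
    ∃ w : Matrix (Fin m) (Fin l) V, A.IsPI w ∧
      A.abs l m (mstar w) = A.abs n m (mstar u) ∧ A.abs m l w = A.abs n l (mstar v)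

/-- Stabilized equivalence `p ≈ q`: `p ⊕ r ∼ q ⊕ r` for some order projection `r`. -/
def ASim (p q : OPE V) : Prop := ∃ r : OPE V, A.IsOPE r ∧ A.Sim (p.d r) (q.d r)

/-- A pair of order projections, representing an element `[(p,q)]` of `K₀(V)`. -/
def IsOPPair (x : OPE V × OPE V) : Prop := A.IsOPE x.1 ∧ A.IsOPE x.2

/-- The relation `(p₁,q₁) ≡ (p₂,q₂) ↔ p₁ ⊕ q₂ ≈ p₂ ⊕ q₁` defining `K₀(V)`. -/
def Krel (x y : OPE V × OPE V) : Prop := A.ASim (x.1.d y.2) (y.1.d x.2)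

/-- Addition of representatives of `K₀(V)` classes. -/
def kadd (x y : OPE V × OPE V) : OPE V × OPE V := (x.1.d y.1, x.2.d y.2)

/-- The representative of the zero class of `K₀(V)`. -/
def kzero : OPE V × OPE V := (OPE.zero V, OPE.zero V)

/-- Representative-level membership in the cone `K₀(V)⁺ = {[(p,0)] : p ∈ 𝒪𝒫_∞(V)}`. -/
def KPos (x : OPE V × OPE V) : Prop :=
  ∃ p : OPE V, A.IsOPE p ∧ A.Krel x (p, OPE.zero V)

/-- Representative-level order `[x] ≤ [y]` in `K₀(V)`: `[y] − [x] ∈ K₀(V)⁺`. -/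
def Kle (x y : OPE V × OPE V) : Prop :=
  ∃ r : OPE V, A.IsOPE r ∧ A.Krel (kadd x (r, OPE.zero V)) y

/-- The order projection `p ∈ Mₙ(V)` is finite: `q ∼ p` and `q ≥ p` imply `q = p`. -/
def FiniteOP (n : ℕ) (p : Matrix (Fin n) (Fin n) V) : Prop :=
  ∀ q : Matrix (Fin n) (Fin n) V, A.IsOP n q → A.Sim ⟨n, q⟩ ⟨n, p⟩ →
    q - p ∈ A.pos n → q = p

end AMOUS

/-! ### Maps between absolute matrix order unit spaces -/

section Maps

variable {V W : Type*} [AddCommGroup V] [Module ℂ V] [StarAddMonoid V] [StarModule ℂ V]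
  [AddCommGroup W] [Module ℂ W] [StarAddMonoid W] [StarModule ℂ W]

/-- The amplification `φₙ` (entrywise application) of a map. -/
def mmap (φ : V →ₗ[ℂ] W) {m n : ℕ} (v : Matrix (Fin m) (Fin n) V) :
    Matrix (Fin m) (Fin n) W :=
  fun i j => φ (v i j)

/-- `φ` is completely `|·|`-preserving: every amplification `φₙ` is `|·|`-preserving. -/
def CAbsPres (A : AMOUS V) (B : AMOUS W) (φ : V →ₗ[ℂ] W) : Prop :=
  ∀ (n : ℕ) (v : Matrix (Fin n) (Fin n) V), B.abs n n (mmap φ v) = mmap φ (A.abs n n v)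

/-- `φ` and `ψ` are completely orthogonal: `φₙ(u) ⊥ ψₙ(v)` for all positive `u, v`. -/
def COrth (A : AMOUS V) (B : AMOUS W) (φ ψ : V →ₗ[ℂ] W) : Prop :=
  ∀ (n : ℕ) (u v : Matrix (Fin n) (Fin n) V), u ∈ A.pos n → v ∈ A.pos n →
    B.Perp (mmap φ u) (mmap ψ v)

/-- The image of an element of `M_∞(V)` under (the amplifications of) `φ`. -/
def mmapOPE (φ : V →ₗ[ℂ] W) (p : OPE V) : OPE W := ⟨p.1, mmap φ p.2⟩

/-- `F` represents a group homomorphism `K₀(V) → K₀(W)` making the `K₀` diagram of `φ`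
commute: it maps `K₀`-representatives to `K₀`-representatives, respects the defining
relation `≡`, is additive, and satisfies `F([(p, 0)]) = [(φ(p), 0)]`. -/
def K0HomProp (A : AMOUS V) (B : AMOUS W) (φ : V →ₗ[ℂ] W)
    (F : OPE V × OPE V → OPE W × OPE W) : Prop :=
  (∀ x, A.IsOPPair x → B.IsOPPair (F x)) ∧
  (∀ x y, A.IsOPPair x → A.IsOPPair y → A.Krel x y → B.Krel (F x) (F y)) ∧
  (∀ x y, A.IsOPPair x → A.IsOPPair y → B.Krel (F (AMOUS.kadd x y)) (AMOUS.kadd (F x) (F y))) ∧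
  (∀ p : OPE V, A.IsOPE p → B.Krel (F (p, OPE.zero V)) (mmapOPE φ p, OPE.zero W))

/-- The completely bounded norm of `φ` with respect to the order unit matrix norms. -/
def cbNorm (A : AMOUS V) (B : AMOUS W) (φ : V →ₗ[ℂ] W) : ℝ :=
  ⨆ n : ℕ, sInf {c : ℝ | 0 ≤ c ∧
    ∀ v : Matrix (Fin n) (Fin n) V, B.mnorm n (mmap φ v) ≤ c * A.mnorm n v}

end Maps

/-!
Conjugation by the self-adjoint sign matrix `𝔡 = diag(𝔍ₙ, −𝔍ₙ)` fixes the diagonal blocks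
`k𝔢ⁿ` and `𝔎ₙ* (k𝔢ⁿ) 𝔎ₙ` of `(k𝔢ⁿ, k𝔢ⁿ)ₙ⁺` and negates the off-diagonal block `saₙ(𝔳)`.
Since the cone is invariant under `𝔳 ↦ 𝔡* 𝔳 𝔡`, this conjugation exchanges
`(k𝔢ⁿ, k𝔢ⁿ)ₙ⁺ + saₙ(𝔳)` and `(k𝔢ⁿ, k𝔢ⁿ)ₙ⁺ − saₙ(𝔳)`, and each lies in the cone iff the other does.
-/

def fdiag (s : ℕ → ℂ) : FMat := fun k l => if k = l then s k else 0

lemma fmul_fdiag_left (s : ℕ → ℂ) (a : FMat) :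
    fmul (fdiag s) a = fun p q => s p * a p q := by
  funext p q
  refine (tsum_eq_single p fun j hj => ?_).trans ?_ <;> simp [fdiag, Ne.symm, *]

lemma fmul_fdiag_right (a : FMat) (s : ℕ → ℂ) :
    fmul a (fdiag s) = fun p q => a p q * s q := by
  funext p q
  refine (tsum_eq_single q fun j hj => ?_).trans ?_ <;> simp [fdiag, *]

lemma fstar_fdiag (s : ℕ → ℂ) : fstar (fdiag s) = fdiag (fun k => starRingEnd ℂ (s k)) := by
  funext k l
  by_cases h : k = l <;> simp [fstar, fdiag, h, Ne.symm]

lemma isFin_fdiag {s : ℕ → ℂ} {N : ℕ} (hs : ∀ k, N ≤ k → s k = 0) : IsFin (fdiag s) :=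
  ⟨N, fun k l hkl => by
    by_cases h : k = l
    · subst h; simp [fdiag, hs k (by omega)]
    · simp [fdiag, h]⟩

lemma fmul_fdiag_eUnit {s : ℕ → ℂ} {i : ℕ} (hi : s i = 1) (j : ℕ) :
    fmul (fdiag s) (eUnit i j) = eUnit i j := by
  funext p q
  rw [fmul_fdiag_left]
  by_cases h : p = i ∧ q = j
  · obtain ⟨rfl, rfl⟩ := h
    simp [eUnit, hi]
  · simp [eUnit, h]

lemma fmul_eUnit_fdiag {s : ℕ → ℂ} {j : ℕ} (hj : s j = 1) (i : ℕ) :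
    fmul (eUnit i j) (fdiag s) = eUnit i j := by
  funext p q
  rw [fmul_fdiag_right]
  by_cases h : p = i ∧ q = j
  · obtain ⟨rfl, rfl⟩ := h
    simp [eUnit, hj]
  · simp [eUnit, h]

lemma fmul_smul_left (c : ℂ) (a b : FMat) : fmul (c • a) b = c • fmul a b := by
  funext p q
  simp only [fmul, Pi.smul_apply, smul_eq_mul, mul_assoc]
  exact tsum_mul_left

lemma fmul_smul_right (c : ℂ) (a b : FMat) : fmul a (c • b) = c • fmul a b := by
  funext p q
  simp only [fmul, Pi.smul_apply, smul_eq_mul, mul_left_comm _ c]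
  exact tsum_mul_left

lemma isFin_fstar {a : FMat} (h : IsFin a) : IsFin (fstar a) := by
  obtain ⟨n, hn⟩ := h
  exact ⟨n, fun i j hij => by simp [fstar, hn j i hij.symm]⟩

lemma isFin_smul (c : ℂ) {a : FMat} (h : IsFin a) : IsFin (c • a) := by
  obtain ⟨n, hn⟩ := h
  exact ⟨n, fun i j hij => by simp [hn i j hij]⟩

lemma isFin_KMat (n : ℕ) : IsFin (KMat n) :=
  ⟨n + n, fun i j h => if_neg fun ⟨hij, hi⟩ => by omega⟩

lemma isFin_eUnit (i j : ℕ) : IsFin (eUnit i j) :=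
  ⟨i + j + 1, fun p q h => if_neg fun ⟨hp, hq⟩ => by omega⟩

lemma JMat_eq_fdiag (n : ℕ) : JMat n = fdiag fun k => if k < n then 1 else 0 := by
  funext k l
  by_cases h : k = l <;> simp [JMat, fdiag, h]

lemma isFin_JMat (n : ℕ) : IsFin (JMat n) :=
  JMat_eq_fdiag n ▸ isFin_fdiag (N := n) fun k hk => if_neg (by omega)

lemma fstar_JMat (n : ℕ) : fstar (JMat n) = JMat n := by
  rw [JMat_eq_fdiag, fstar_fdiag]
  simp only [apply_ite, map_one, map_zero]

/-- The sign matrix `diag(𝔍ₙ, −𝔍ₙ)`. -/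
def signMat (n : ℕ) : FMat :=
  fdiag fun k => if k < n then 1 else if k < n + n then -1 else 0

lemma isFin_signMat (n : ℕ) : IsFin (signMat n) :=
  isFin_fdiag (N := n + n) fun k hk => by rw [if_neg (by omega), if_neg (by omega)]

lemma fstar_signMat (n : ℕ) : fstar (signMat n) = signMat n := by
  rw [signMat, fstar_fdiag]
  congr 1
  funext k
  split_ifs <;> simp

lemma fmul_signMat_JMat (n : ℕ) : fmul (signMat n) (JMat n) = JMat n := by
  funext p q
  rw [signMat, fmul_fdiag_left]
  by_cases h : p = q ∧ p < n
  · obtain ⟨rfl, hp⟩ := h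
    simp [JMat, hp]
  · simp [JMat, h]

lemma fmul_JMat_signMat (n : ℕ) : fmul (JMat n) (signMat n) = JMat n := by
  funext p q
  rw [signMat, fmul_fdiag_right]
  by_cases h : p = q ∧ p < n
  · obtain ⟨rfl, hp⟩ := h
    simp [JMat, hp]
  · simp [JMat, h]

lemma fmul_KMat_signMat (n : ℕ) : fmul (KMat n) (signMat n) = -KMat n := by
  funext p q
  rw [signMat, fmul_fdiag_right]
  by_cases h : q = p + n ∧ p < n
  · obtain ⟨rfl, hp⟩ := h
    simp [KMat, hp, show ¬ p + n < n by omega, show p + n < n + n by omega]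
  · simp [KMat, h]

lemma fmul_signMat_fstar_KMat (n : ℕ) :
    fmul (signMat n) (fstar (KMat n)) = -fstar (KMat n) := by
  funext p q
  rw [signMat, fmul_fdiag_left]
  by_cases h : p = q + n ∧ q < n
  · obtain ⟨rfl, hq⟩ := h
    simp [fstar, KMat, hq, show ¬ q + n < n by omega, show q + n < n + n by omega]
  · simp [fstar, KMat, h]

namespace FBimod

variable {V : Type*} [AddCommGroup V] [Module ℂ V] (M : FBimod V)

def conjHom (a : FMat) : V →+ V :=
  AddMonoidHom.mk' (M.conj a) fun u v => by
    rw [conj, conj, conj, M.rsmul_add, M.lsmul_add]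

@[simp] lemma conjHom_apply (a : FMat) (v : V) : M.conjHom a v = M.conj a v := rfl

lemma conj_add (a : FMat) (u v : V) : M.conj a (u + v) = M.conj a u + M.conj a v :=
  (M.conjHom a).map_add u v

lemma conj_sub (a : FMat) (u v : V) : M.conj a (u - v) = M.conj a u - M.conj a v :=
  (M.conjHom a).map_sub u v

lemma lsmul_neg (a : FMat) (v : V) : M.lsmul a (-v) = -M.lsmul a v :=
  (AddMonoidHom.mk' (M.lsmul a) (M.lsmul_add a)).map_neg v

lemma lsmul_neg_left {a : FMat} (ha : IsFin a) (v : V) : M.lsmul (-a) v = -M.lsmul a v := by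
  rw [← neg_one_smul ℂ a, M.smul_lsmul _ _ _ ha, neg_one_smul]

lemma rsmul_neg_right (v : V) {a : FMat} (ha : IsFin a) : M.rsmul v (-a) = -M.rsmul v a := by
  rw [← neg_one_smul ℂ a, M.smul_rsmul _ _ _ ha, neg_one_smul]

lemma cut_eq_conj (n : ℕ) (v : V) : M.cut n v = M.conj (JMat n) v := by
  rw [cut, conj, fstar_JMat]

lemma conj_lsmul {a b : FMat} (ha : IsFin a) (hb : IsFin b) (v : V) :
    M.conj a (M.lsmul b v) = M.lsmul (fmul (fstar a) b) (M.rsmul v a) := by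
  rw [conj, M.lsmul_rsmul b _ a hb ha, M.mul_lsmul (fstar a) b _ (isFin_fstar ha) hb]

lemma conj_lsmul_rsmul {a b c : FMat} (ha : IsFin a) (hb : IsFin b) (hc : IsFin c) (v : V) :
    M.conj a (M.lsmul b (M.rsmul v c)) = M.lsmul (fmul (fstar a) b) (M.rsmul v (fmul c a)) := by
  rw [M.conj_lsmul ha hb, M.rsmul_mul v c a hc ha]

/-- Complex scalars are tied to the `𝔉`-actions only by `smul_compat`, on `𝔍ₙ𝔙𝔍ₙ`;
hence the hypotheses on `𝔞` and `𝔳`. -/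
lemma conj_smul_of_fixed {n : ℕ} {a : FMat} (ha : IsFin a)
    (hl : fmul (fstar a) (JMat n) = JMat n) (hr : fmul (JMat n) (fstar a) = JMat n)
    {w : V} (hw : M.cut n w = w) (hfix : M.conj a w = w) (c : ℂ) :
    M.conj a (c • w) = c • w := by
  have hcJ := isFin_smul c (isFin_JMat n)
  calc M.conj a (c • w)
      = M.lsmul (fmul (fstar a) (c • JMat n)) (M.rsmul w a) := by
        rw [← M.smul_compat c n w hw, M.conj_lsmul ha hcJ]
    _ = M.lsmul (fmul (c • JMat n) (fstar a)) (M.rsmul w a) := by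
        rw [fmul_smul_left, fmul_smul_right, hl, hr]
    _ = c • w := by
        rw [M.mul_lsmul _ _ _ hcJ (isFin_fstar ha), ← conj, hfix, M.smul_compat c n w hw]

lemma conj_fdiag_epow {s : ℕ → ℂ} (hfin : IsFin (fdiag s)) {n : ℕ} (hs : ∀ i < n, s i = 1)
    (e : V) : M.conj (fdiag s) (M.epow e n) = M.epow e n := by
  rw [epow, ← conjHom_apply, map_sum]
  refine Finset.sum_congr rfl fun i hi => ?_
  have hsi := hs i (Finset.mem_range.mp hi)
  rw [conjHom_apply, M.conj_lsmul_rsmul hfin (isFin_eUnit i 0) (isFin_eUnit 0 i), fstar_fdiag,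
    fmul_fdiag_eUnit (by rw [hsi, map_one]), fmul_eUnit_fdiag hsi]

lemma cut_epow (e : V) (n : ℕ) : M.cut n (M.epow e n) = M.epow e n := by
  rw [cut_eq_conj, JMat_eq_fdiag]
  exact M.conj_fdiag_epow (JMat_eq_fdiag n ▸ isFin_JMat n) (fun i hi => if_pos hi) e

lemma conj_signMat_smul_epow (e : V) (n : ℕ) (c : ℂ) :
    M.conj (signMat n) (c • M.epow e n) = c • M.epow e n := by
  refine M.conj_smul_of_fixed (isFin_signMat n) ?_ ?_ (M.cut_epow e n) ?_ c
  · rw [fstar_signMat, fmul_signMat_JMat]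
  · rw [fstar_signMat, fmul_JMat_signMat]
  · exact M.conj_fdiag_epow (isFin_signMat n) (fun i hi => if_pos hi) e

lemma conj_signMat_pairPlus {n : ℕ} {w₁ : V} (hw₁ : M.conj (signMat n) w₁ = w₁) (w₂ : V) :
    M.conj (signMat n) (M.pairPlus n w₁ w₂) = M.pairPlus n w₁ w₂ := by
  have hK := isFin_KMat n
  rw [pairPlus, conj_add, hw₁,
    M.conj_lsmul_rsmul (isFin_signMat n) (isFin_fstar hK) hK, fstar_signMat,
    fmul_signMat_fstar_KMat, fmul_KMat_signMat, M.rsmul_neg_right _ hK,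
    M.lsmul_neg_left (isFin_fstar hK), M.lsmul_neg, neg_neg]

lemma conj_signMat_san (n : ℕ) (w : V) : M.conj (signMat n) (M.san n w) = -M.san n w := by
  have hd := isFin_signMat n
  have hK := isFin_KMat n
  have hJ := isFin_JMat n
  rw [san, conj_add,
    M.conj_lsmul_rsmul hd hJ hK, M.conj_lsmul_rsmul hd (isFin_fstar hK) hJ, fstar_signMat,
    fmul_signMat_JMat, fmul_KMat_signMat, fmul_signMat_fstar_KMat, fmul_JMat_signMat,
    M.rsmul_neg_right _ hK, M.lsmul_neg_left (isFin_fstar hK), M.lsmul_neg, neg_add]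

variable {M} in
lemma IsCone.mem_iff_of_conj {C : Set V} (hC : M.IsCone C) {a : FMat} (ha : IsFin a)
    {x y : V} (hxy : M.conj a x = y) (hyx : M.conj a y = x) : x ∈ C ↔ y ∈ C :=
  ⟨fun hx => hxy ▸ hC.2.2 x hx a ha, fun hy => hyx ▸ hC.2.2 y hy a ha⟩

end FBimod

theorem statement7_general {V : Type*} [AddCommGroup V] [Module ℂ V] (M : FBimod V) (C : Set V)
    (e : V) (hC : M.IsCone C)
    (n : ℕ) (v : V) (k : ℝ) :
    M.pairPlus n ((k : ℂ) • M.epow e n) ((k : ℂ) • M.epow e n) + M.san n v ∈ C ↔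
      M.pairPlus n ((k : ℂ) • M.epow e n) ((k : ℂ) • M.epow e n) - M.san n v ∈ C := by
  have hP := M.conj_signMat_pairPlus (M.conj_signMat_smul_epow e n k) ((k : ℂ) • M.epow e n)
  have hs := M.conj_signMat_san n v
  refine hC.mem_iff_of_conj (isFin_signMat n) ?_ ?_
  · rw [M.conj_add, hP, hs, sub_eq_add_neg]
  · rw [M.conj_sub, hP, hs, sub_neg_eq_add]

/-- In a non-degenerate ordered `𝔉`-bimodule with a local order unit
`𝔢` and Archimedean cone, for `𝔳 ∈ 𝔍ₙ𝔙𝔍ₙ` and `k > 0`: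
`(k𝔢ⁿ, k𝔢ⁿ)ₙ⁺ + saₙ(𝔳) ∈ 𝔙⁺ ↔ (k𝔢ⁿ, k𝔢ⁿ)ₙ⁺ − saₙ(𝔳) ∈ 𝔙⁺`. -/
theorem statement7 {V : Type*} [AddCommGroup V] [Module ℂ V] (M : FBimod V) (C : Set V)
    (e : V) (hC : M.IsCone C) (hunit : M.IsLocalOrderUnit C e) (harch : M.ConeArch C)
    (n : ℕ) (v : V) (hv : M.cut n v = v) (k : ℝ) (hk : 0 < k) :
    M.pairPlus n ((k : ℂ) • M.epow e n) ((k : ℂ) • M.epow e n) + M.san n v ∈ C ↔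
      M.pairPlus n ((k : ℂ) • M.epow e n) ((k : ℂ) • M.epow e n) - M.san n v ∈ C :=
  statement7_general M C e hC n v k
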